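/- Let w be a tempering function, let C₊, C₋, β₊, β₋ > 0 and α₊, α₋ < 2, and let ν be the associated generalized tempered stable Lévy density. Then ∫_{ℝ \ {0}} min(1, z²) ν(z) dz < ∞; in particular ν is a Lévy density. -/

import Mathlib

open Set Filter MeasureTheory

/-- A tempering function: continuous, nonincreasing on `(0,∞)`, nonnegative,
with limit `1` at `0⁺` and `zⁿ w z → 0` as `z → ∞` for every `n`. -/
def IsTempering (w : ℝ → ℝ) : Prop :=
  ContinuousOn w (Ioi 0) ∧
  (∀ z ∈ Ioi (0:ℝ), 0 ≤ w z) ∧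
  AntitoneOn w (Ioi 0) ∧
  Tendsto w (nhdsWithin 0 (Ioi 0)) (nhds 1) ∧
  (∀ n : ℕ, Tendsto (fun z : ℝ => z ^ n * w z) atTop (nhds 0))

/-- The generalized tempered stable (GTS) Lévy density. -/
noncomputable def gtsDensity (w : ℝ → ℝ) (Cp Cm βp βm αp αm : ℝ) (z : ℝ) : ℝ :=
  if 0 < z then Cp * w (βp * z) / z ^ (1 + αp)
  else if z < 0 then Cm * w (βm * |z|) / |z| ^ (1 + αm)
  else 0

/-!
Near `0` the truncated integrand is `z ^ (1 - α) w (β z)` with `w` bounded there, and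
`1 - α > -1`; near `∞` it is `z ^ (-(1 + α)) w (β z)`, and `w` decays faster than every power.
These are the hypotheses of Mellin convergence at `s = 1`, which gives integrability on
`(0, ∞)`; the negative half line is the mirror image.
-/

open Topology Asymptotics

theorem integrableOn_Ioi_min_one_sq_mul_div_rpow {φ : ℝ → ℝ} {α : ℝ} (hα : α < 2)
    (hφ : LocallyIntegrableOn φ (Ioi 0)) (hφ₀ : φ =O[𝓝[>] 0] fun _ => (1 : ℝ))
    (hφ_top : φ =O[atTop] (· ^ (α - 1))) :
    IntegrableOn (fun z => min 1 (z ^ 2) * (φ z / z ^ (1 + α))) (Ioi 0) := by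
  have hf_loc : LocallyIntegrableOn (fun z => min 1 (z ^ 2) * (φ z / z ^ (1 + α))) (Ioi 0) := by
    have hcont : ContinuousOn (fun z : ℝ => min 1 (z ^ 2) / z ^ (1 + α)) (Ioi 0) :=
      ContinuousOn.div (by fun_prop)
        (fun z hz => (Real.continuousAt_rpow_const z _ (.inl (ne_of_gt hz))).continuousWithinAt)
        fun z hz => (Real.rpow_pos_of_pos hz _).ne'
    convert hφ.continuousOn_mul hcont isOpen_Ioi.isLocallyClosed using 2
    ring
  have h_zero :
      (fun z => min 1 (z ^ 2) * (φ z / z ^ (1 + α))) =O[𝓝[>] 0] (· ^ (-(α - 1))) := by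
    have : (fun z : ℝ => z ^ (-(α - 1)) * φ z) =O[𝓝[>] 0] (fun z => z ^ (-(α - 1)) * 1) :=
      (isBigO_refl _ _).mul hφ₀
    refine this.congr' ?_ (.of_eq (by simp))
    filter_upwards [Ioo_mem_nhdsGT (zero_lt_one' ℝ)] with z ⟨hz₀, hz₁⟩
    rw [min_eq_right (by nlinarith), show -(α - 1) = 2 - (1 + α) by ring, Real.rpow_sub hz₀,
      Real.rpow_two]
    ring
  have h_top : (fun z => min 1 (z ^ 2) * (φ z / z ^ (1 + α))) =O[atTop] (· ^ (-2 : ℝ)) := by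
    have : (fun z : ℝ => z ^ (-(1 + α)) * φ z) =O[atTop]
        (fun z => z ^ (-(1 + α)) * z ^ (α - 1)) :=
      (isBigO_refl _ _).mul hφ_top
    refine this.congr' ?_ ?_
    · filter_upwards [eventually_ge_atTop 1] with z hz
      rw [min_eq_left (by nlinarith), Real.rpow_neg (by linarith)]
      ring
    · filter_upwards [eventually_gt_atTop 0] with z hz
      rw [← Real.rpow_add hz]
      ring_nf
  simpa using
    mellin_convergent_of_isBigO_scalar (s := 1) hf_loc h_top (by norm_num) h_zero (by linarith)

namespace IsTempering

variable {w : ℝ → ℝ}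

theorem isBigO_rpow_atTop (hw : IsTempering w) (s : ℝ) : w =O[atTop] (· ^ s) := by
  obtain ⟨n, hn⟩ := exists_nat_ge (-s)
  have h_decay : (fun z => z ^ n * w z) =O[atTop] fun _ => (1 : ℝ) :=
    (hw.2.2.2.2 n).isBigO_one ℝ
  have h_pow : (fun z : ℝ => z ^ (-(n : ℝ))) =O[atTop] (· ^ s) := by
    refine IsBigO.of_bound 1 ?_
    filter_upwards [eventually_ge_atTop 1] with z hz
    rw [one_mul, Real.norm_of_nonneg (by positivity), Real.norm_of_nonneg (by positivity)]
    exact Real.rpow_le_rpow_of_exponent_le hz (by linarith)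
  refine (h_decay.mul h_pow).congr' ?_ (.of_eq (by simp))
  filter_upwards [eventually_gt_atTop 0] with z hz
  rw [Real.rpow_neg hz.le, Real.rpow_natCast, mul_comm, ← mul_assoc,
    inv_mul_cancel₀ (by positivity), one_mul]

theorem comp_mul_left (hw : IsTempering w) {β : ℝ} (hβ : 0 < β) :
    IsTempering fun z => w (β * z) := by
  obtain ⟨h_cont, h_nonneg, h_anti, h_lim, h_decay⟩ := hw
  have h_maps : MapsTo (β * ·) (Ioi 0) (Ioi 0) := fun z hz => mul_pos hβ hz
  refine ⟨h_cont.comp (by fun_prop) h_maps, fun z hz => h_nonneg _ (h_maps hz),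
    fun a ha b hb hab => h_anti (h_maps ha) (h_maps hb) (mul_le_mul_of_nonneg_left hab hβ.le),
    ?_, fun n => ?_⟩
  · refine h_lim.comp (tendsto_nhdsWithin_iff.2 ⟨?_, eventually_nhdsWithin_of_forall h_maps⟩)
    exact tendsto_nhdsWithin_of_tendsto_nhds (by simpa using (continuous_const_mul β).tendsto 0)
  · have := ((h_decay n).comp (tendsto_id.const_mul_atTop hβ)).const_mul (β⁻¹ ^ n)
    rw [mul_zero] at this
    refine this.congr fun z => ?_
    simp only [Function.comp_apply, id, ← mul_assoc, ← mul_pow, inv_mul_cancel₀ hβ.ne',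
      one_mul]

theorem integrableOn_Ioi_min_one_sq_mul_div_rpow (hw : IsTempering w) {α : ℝ} (hα : α < 2) :
    IntegrableOn (fun z => min 1 (z ^ 2) * (w z / z ^ (1 + α))) (Ioi 0) :=
  _root_.integrableOn_Ioi_min_one_sq_mul_div_rpow hα (hw.1.locallyIntegrableOn measurableSet_Ioi)
    (hw.2.2.2.1.isBigO_one ℝ) (hw.isBigO_rpow_atTop _)

end IsTempering

theorem gts_isLevyDensity_general (w : ℝ → ℝ) (hw : IsTempering w)
    (Cp Cm βp βm αp αm : ℝ)
    (hβp : 0 < βp) (hβm : 0 < βm)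
    (hαp : αp < 2) (hαm : αm < 2) :
    IntegrableOn (fun z : ℝ => min 1 (z ^ 2) * gtsDensity w Cp Cm βp βm αp αm z)
      {(0:ℝ)}ᶜ := by
  have h_pos :=
    ((hw.comp_mul_left hβp).integrableOn_Ioi_min_one_sq_mul_div_rpow hαp).const_mul Cp
  have h_neg :=
    ((hw.comp_mul_left hβm).integrableOn_Ioi_min_one_sq_mul_div_rpow hαm).const_mul Cm
  rw [← neg_zero] at h_neg
  rw [← Iio_union_Ioi]
  refine ((IntegrableOn.comp_neg_Iio h_neg).congr_fun (fun z hz => ?_) measurableSet_Iio).union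
    (IntegrableOn.congr_fun h_pos (fun z hz => ?_) measurableSet_Ioi)
  · have hz : z < 0 := hz
    simp only [gtsDensity, if_neg hz.not_gt, if_pos hz, abs_of_neg hz, neg_sq]
    ring
  · have hz : 0 < z := hz
    simp only [gtsDensity, if_pos hz]
    ring

theorem gts_isLevyDensity (w : ℝ → ℝ) (hw : IsTempering w)
    (Cp Cm βp βm αp αm : ℝ)
    (hCp : 0 < Cp) (hCm : 0 < Cm) (hβp : 0 < βp) (hβm : 0 < βm)
    (hαp : αp < 2) (hαm : αm < 2) :
    IntegrableOn (fun z : ℝ => min 1 (z ^ 2) * gtsDensity w Cp Cm βp βm αp αm z)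
      {(0:ℝ)}ᶜ :=
  gts_isLevyDensity_general w hw Cp Cm βp βm αp αm hβp hβm hαp hαm
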